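/- arXiv:1901.08750 — 5 statements merged into one kernel-verified Lean document; each statement's English description precedes it below -/
import Mathlib

section
/- Let n ≥ 3. There exists a constant C₀ > 0 depending only on n with the following property: for every x₀ ∈ ℝⁿ, every r > 0, every M ≥ 0, and every function u that is twice continuously differentiable on the open ball B(x₀, 2r) and satisfies Δu(x) ≥ 0 and 0 ≤ u(x) ≤ M for all x ∈ B(x₀, 2r), one has ∫_{B(x₀, r)} Δu(x) dx ≤ C₀ · M · r^(n−2). -/
/-!
Test `Δu` against a smooth cutoff `φ` that equals `1` on `B(x₀, r)` and is supported in
`B(x₀, 3r/2)`. As `Δu ≥ 0`, Green's identity gives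
`∫_{B(x₀, r)} Δu ≤ ∫ φ Δu = ∫ Δφ · u ≤ M ∫ |Δφ|`.
Taking `φ(x) = φ₁((x - x₀)/r)` for one fixed bump `φ₁`, we have `Δφ(x) = r⁻² Δφ₁((x - x₀)/r)`,
so `∫ |Δφ| = r^(n-2) ∫ |Δφ₁|`.
-/

open MeasureTheory Metric Finset

/-- The Laplace operator: sum of pure second partial derivatives
(trace of the second derivative). -/
noncomputable def laplacian {n : ℕ} (u : EuclideanSpace ℝ (Fin n) → ℝ)
    (x : EuclideanSpace ℝ (Fin n)) : ℝ :=
  ∑ i, iteratedFDeriv ℝ 2 u x ![EuclideanSpace.single i 1, EuclideanSpace.single i 1]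

open InnerProductSpace Module
open scoped Laplacian

section SecondDerivative

variable {E F : Type*} [NormedAddCommGroup E] [NormedSpace ℝ E] [NormedAddCommGroup F]
  [NormedSpace ℝ F]

theorem iteratedFDeriv_two_apply_diag {f : E → F} {x : E} (hf : ContDiffAt ℝ 2 f x) (v : E) :
    iteratedFDeriv ℝ 2 f x ![v, v] = fderiv ℝ (fun y => fderiv ℝ f y v) x v := by
  have hd : DifferentiableAt ℝ (fderiv ℝ f) x :=
    (hf.fderiv_right (m := 1) le_rfl).differentiableAt one_ne_zero
  rw [iteratedFDeriv_two_apply, fderiv_clm_apply hd (differentiableAt_const v)]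
  simp

theorem ContDiffOn.continuousOn_fderiv_fderiv_apply {f : E → F} {U : Set E}
    (hf : ContDiffOn ℝ 2 f U) (hU : IsOpen U) (v : E) :
    ContinuousOn (fun x => fderiv ℝ (fun y => fderiv ℝ f y v) x v) U :=
  (((hf.fderiv_of_isOpen hU (m := 1) le_rfl).clm_apply
    contDiffOn_const).continuousOn_fderiv_of_isOpen hU le_rfl).clm_apply continuousOn_const

theorem ContDiff.continuous_fderiv_fderiv_apply {f : E → F} (hf : ContDiff ℝ 2 f) (v : E) :
    Continuous (fun x => fderiv ℝ (fun y => fderiv ℝ f y v) x v) :=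
  continuousOn_univ.mp (hf.contDiffOn.continuousOn_fderiv_fderiv_apply isOpen_univ v)

end SecondDerivative

theorem HasCompactSupport.integrable_mul_of_continuousOn {X : Type*} [TopologicalSpace X]
    [MeasurableSpace X] [OpensMeasurableSpace X] {μ : Measure X} [IsFiniteMeasureOnCompacts μ]
    {f g : X → ℝ} {U : Set X} (hfc : HasCompactSupport f) (hf : Continuous f) (hU : IsOpen U)
    (hfU : tsupport f ⊆ U) (hg : ContinuousOn g U) :
    Integrable (fun x => f x * g x) μ :=
  ((hf.continuousOn.mul hg).continuous_of_tsupport_subset hU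
    (tsupport_mul_subset_left.trans hfU)).integrable_of_hasCompactSupport hfc.mul_right

section IntegrationByParts

variable {E : Type*} [NormedAddCommGroup E] [NormedSpace ℝ E] [FiniteDimensional ℝ E]
  [MeasurableSpace E] [BorelSpace E] {μ : Measure E} [μ.IsAddHaarMeasure]
  {U : Set E} {φ u : E → ℝ}

theorem integral_mul_fderiv_fderiv_eq_integral_fderiv_fderiv_mul (hU : IsOpen U)
    (hφ : ContDiff ℝ 2 φ) (hφc : HasCompactSupport φ) (hφU : tsupport φ ⊆ U)
    (hu : ContDiffOn ℝ 2 u U) (v : E) :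
    ∫ x, φ x * fderiv ℝ (fun y => fderiv ℝ u y v) x v ∂μ
      = ∫ x, fderiv ℝ (fun y => fderiv ℝ φ y v) x v * u x ∂μ := by
  set φ' := fun y => fderiv ℝ φ y v
  set u' := fun y => fderiv ℝ u y v
  have hφ' : ContDiff ℝ 1 φ' := (hφ.fderiv_right (m := 1) le_rfl).clm_apply contDiff_const
  have hu' : ContDiffOn ℝ 1 u' U :=
    (hu.fderiv_of_isOpen hU (m := 1) le_rfl).clm_apply contDiffOn_const
  have hφ'c : HasCompactSupport φ' := hφc.fderiv_apply ℝ v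
  have hφ'U : tsupport φ' ⊆ U := (tsupport_fderiv_apply_subset ℝ v).trans hφU
  have hφ'u' : Integrable (fun x => φ' x * u' x) μ :=
    hφ'c.integrable_mul_of_continuousOn hφ'.continuous hU hφ'U hu'.continuousOn
  have first : ∫ x, φ x * fderiv ℝ u' x v ∂μ = -∫ x, φ' x * u' x ∂μ :=
    integral_mul_fderiv_eq_neg_fderiv_mul_of_integrable hφ'u'
      (hφc.integrable_mul_of_continuousOn hφ.continuous hU hφU
        (hu.continuousOn_fderiv_fderiv_apply hU v))
      (hφc.integrable_mul_of_continuousOn hφ.continuous hU hφU hu'.continuousOn)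
      (fun x _ => hφ.differentiable two_ne_zero x)
      (fun x hx => (hu'.differentiableOn one_ne_zero).differentiableAt (hU.mem_nhds (hφU hx)))
  have second : ∫ x, φ' x * fderiv ℝ u x v ∂μ = -∫ x, fderiv ℝ φ' x v * u x ∂μ :=
    integral_mul_fderiv_eq_neg_fderiv_mul_of_integrable
      ((hφ'c.fderiv_apply ℝ v).integrable_mul_of_continuousOn
        (hφ.continuous_fderiv_fderiv_apply v) hU
        ((tsupport_fderiv_apply_subset ℝ v).trans hφ'U) hu.continuousOn)
      hφ'u'
      (hφ'c.integrable_mul_of_continuousOn hφ'.continuous hU hφ'U hu.continuousOn)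
      (fun x _ => hφ'.differentiable one_ne_zero x)
      (fun x hx => (hu.differentiableOn two_ne_zero).differentiableAt (hU.mem_nhds (hφ'U hx)))
  rw [first, second, neg_neg]

end IntegrationByParts

section Laplacian

variable {E : Type*} [NormedAddCommGroup E] [InnerProductSpace ℝ E] [FiniteDimensional ℝ E]

theorem laplacian_eq_sum_fderiv_fderiv {ι : Type*} [Fintype ι] (b : OrthonormalBasis ι ℝ E)
    {f : E → ℝ} {x : E} (hf : ContDiffAt ℝ 2 f x) :
    Δ f x = ∑ i, fderiv ℝ (fun y => fderiv ℝ f y (b i)) x (b i) := by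
  simp [laplacian_eq_iteratedFDeriv_orthonormalBasis f b, iteratedFDeriv_two_apply_diag hf]

theorem ContDiffOn.continuousOn_laplacian {f : E → ℝ} {U : Set E} (hf : ContDiffOn ℝ 2 f U)
    (hU : IsOpen U) : ContinuousOn (Δ f) U := by
  let b := stdOrthonormalBasis ℝ E
  have hsum : ContinuousOn (fun x => ∑ i, fderiv ℝ (fun y => fderiv ℝ f y (b i)) x (b i)) U :=
    continuousOn_finsetSum _ fun i _ => hf.continuousOn_fderiv_fderiv_apply hU (b i)
  exact hsum.congr fun x hx => laplacian_eq_sum_fderiv_fderiv b (hf.contDiffAt (hU.mem_nhds hx))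

theorem ContDiff.continuous_laplacian {f : E → ℝ} (hf : ContDiff ℝ 2 f) : Continuous (Δ f) :=
  continuousOn_univ.mp (hf.contDiffOn.continuousOn_laplacian isOpen_univ)

theorem support_laplacian_subset (f : E → ℝ) : Function.support (Δ f) ⊆ tsupport f := by
  intro x hx
  by_contra h
  rw [notMem_tsupport_iff_eventuallyEq] at h
  have := (laplacian_congr_nhds h).eq_of_nhds
  rw [show (0 : E → ℝ) = fun _ => 0 from rfl, laplacian_const] at this
  exact hx this

theorem tsupport_laplacian_subset (f : E → ℝ) : tsupport (Δ f) ⊆ tsupport f :=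
  closure_minimal (support_laplacian_subset f) (isClosed_tsupport f)

theorem HasCompactSupport.laplacian {f : E → ℝ} (hf : HasCompactSupport f) :
    HasCompactSupport (Δ f) :=
  hf.mono' (support_laplacian_subset f)

theorem laplacian_comp_smul_sub {f : E → ℝ} (hf : ContDiff ℝ 2 f) (c : ℝ) (x₀ x : E) :
    Δ (fun y => f (c • (y - x₀))) x = c ^ 2 * Δ f (c • (x - x₀)) := by
  let L : E →L[ℝ] E := c • ContinuousLinearMap.id ℝ E
  have hD2 : ∀ v, iteratedFDeriv ℝ 2 (fun y => f (c • (y - x₀))) x ![v, v]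
      = c ^ 2 * iteratedFDeriv ℝ 2 f (c • (x - x₀)) ![v, v] := by
    intro v
    rw [iteratedFDeriv_comp_sub (f := fun z => f (c • z)),
      show (fun z => f (c • z)) = f ∘ L from rfl, L.iteratedFDeriv_comp_right hf _ le_rfl]
    simp [ContinuousMultilinearMap.compContinuousLinearMap_apply,
      ContinuousMultilinearMap.map_smul_univ, L, sq]
  simp [laplacian_eq_iteratedFDeriv_stdOrthonormalBasis, hD2, Finset.mul_sum]

variable [MeasurableSpace E] [BorelSpace E] {μ : Measure E} [μ.IsAddHaarMeasure]
  {U : Set E} {φ u : E → ℝ}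

theorem integral_mul_laplacian_eq_integral_laplacian_mul (hU : IsOpen U)
    (hφ : ContDiff ℝ 2 φ) (hφc : HasCompactSupport φ) (hφU : tsupport φ ⊆ U)
    (hu : ContDiffOn ℝ 2 u U) :
    ∫ x, φ x * Δ u x ∂μ = ∫ x, Δ φ x * u x ∂μ := by
  let b := stdOrthonormalBasis ℝ E
  have hleft : ∀ x, φ x * Δ u x = ∑ i, φ x * fderiv ℝ (fun y => fderiv ℝ u y (b i)) x (b i) := by
    intro x
    by_cases hx : x ∈ U
    · rw [laplacian_eq_sum_fderiv_fderiv b (hu.contDiffAt (hU.mem_nhds hx)), Finset.mul_sum]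
    · simp [image_eq_zero_of_notMem_tsupport fun h => hx (hφU h)]
  have hright : ∀ x, Δ φ x * u x = ∑ i, fderiv ℝ (fun y => fderiv ℝ φ y (b i)) x (b i) * u x :=
    fun x => by rw [laplacian_eq_sum_fderiv_fderiv b hφ.contDiffAt, Finset.sum_mul]
  simp_rw [hleft, hright]
  rw [integral_finsetSum, integral_finsetSum]
  · exact Finset.sum_congr rfl fun i _ =>
      integral_mul_fderiv_fderiv_eq_integral_fderiv_fderiv_mul hU hφ hφc hφU hu (b i)
  · exact fun i _ => ((hφc.fderiv_apply ℝ (b i)).fderiv_apply ℝ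
      (b i)).integrable_mul_of_continuousOn (hφ.continuous_fderiv_fderiv_apply (b i)) hU
      ((tsupport_fderiv_apply_subset ℝ _).trans ((tsupport_fderiv_apply_subset ℝ _).trans hφU))
      hu.continuousOn
  · exact fun i _ => hφc.integrable_mul_of_continuousOn hφ.continuous hU hφU
      (hu.continuousOn_fderiv_fderiv_apply hU (b i))

theorem integral_abs_laplacian_comp_smul_sub {f : E → ℝ} (hf : ContDiff ℝ 2 f) {r : ℝ}
    (hr : 0 < r) (x₀ : E) :
    ∫ x, |Δ (fun y => f (r⁻¹ • (y - x₀))) x| ∂μ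
      = r ^ ((finrank ℝ E : ℝ) - 2) * ∫ x, |Δ f x| ∂μ := by
  simp_rw [laplacian_comp_smul_sub hf, abs_mul, abs_of_nonneg (sq_nonneg r⁻¹)]
  rw [integral_const_mul, integral_sub_right_eq_self (fun y => |Δ f (r⁻¹ • y)|) x₀,
    Measure.integral_comp_inv_smul_of_nonneg μ (fun y => |Δ f y|) hr.le, smul_eq_mul,
    Real.rpow_sub hr, Real.rpow_natCast, Real.rpow_two]
  field_simp

end Laplacian

section Cutoff

variable {E : Type*} [NormedAddCommGroup E] [InnerProductSpace ℝ E] [FiniteDimensional ℝ E]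

noncomputable def ballCutoff (x₀ : E) {r : ℝ} (hr : 0 < r) : ContDiffBump x₀ :=
  ⟨r, 3 / 2 * r, hr, by linarith⟩

theorem ballCutoff_apply (x₀ : E) {r : ℝ} (hr : 0 < r) (x : E) :
    ballCutoff x₀ hr x = ballCutoff (0 : E) one_pos (r⁻¹ • (x - x₀)) := by
  simp only [ContDiffBump.apply, ballCutoff, sub_zero, inv_one, one_smul, div_one, mul_one]
  rw [mul_div_assoc, div_self hr.ne', mul_one]

variable [MeasurableSpace E] [BorelSpace E] {μ : Measure E} [μ.IsAddHaarMeasure]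

theorem integral_laplacian_ball_le {x₀ : E} {r M : ℝ} {u : E → ℝ} (hr : 0 < r)
    (hu : ContDiffOn ℝ 2 u (ball x₀ (2 * r))) (hΔu : ∀ x ∈ ball x₀ (2 * r), 0 ≤ Δ u x)
    (hbd : ∀ x ∈ ball x₀ (2 * r), |u x| ≤ M) :
    ∫ x in ball x₀ r, Δ u x ∂μ
      ≤ M * r ^ ((finrank ℝ E : ℝ) - 2) * ∫ x, |Δ (ballCutoff (0 : E) one_pos : E → ℝ) x| ∂μ := by
  let φ := ballCutoff x₀ hr
  have hU : IsOpen (ball x₀ (2 * r)) := isOpen_ball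
  have hφ : ContDiff ℝ 2 ⇑φ := φ.contDiff
  have hφU : tsupport ⇑φ ⊆ ball x₀ (2 * r) := by
    rw [φ.tsupport_eq]
    exact closedBall_subset_ball (show 3 / 2 * r < 2 * r by linarith)
  have hΔφU : tsupport (Δ ⇑φ) ⊆ ball x₀ (2 * r) := (tsupport_laplacian_subset ⇑φ).trans hφU
  have hφΔu : Integrable (fun x => φ x * Δ u x) μ :=
    φ.hasCompactSupport.integrable_mul_of_continuousOn hφ.continuous hU hφU
      (hu.continuousOn_laplacian hU)
  have hΔφu : Integrable (fun x => Δ ⇑φ x * u x) μ :=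
    φ.hasCompactSupport.laplacian.integrable_mul_of_continuousOn hφ.continuous_laplacian hU
      hΔφU hu.continuousOn
  have hΔφ : Integrable (fun x => M * |Δ ⇑φ x|) μ :=
    (hφ.continuous_laplacian.integrable_of_hasCompactSupport
      φ.hasCompactSupport.laplacian).abs.const_mul M
  have hφΔu_nonneg : ∀ x, 0 ≤ φ x * Δ u x := by
    intro x
    by_cases hx : x ∈ ball x₀ (2 * r)
    · exact mul_nonneg φ.nonneg (hΔu x hx)
    · simp [image_eq_zero_of_notMem_tsupport fun h => hx (hφU h)]
  have hΔφu_le : ∀ x, Δ ⇑φ x * u x ≤ M * |Δ ⇑φ x| := by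
    intro x
    by_cases hx : x ∈ ball x₀ (2 * r)
    · calc Δ ⇑φ x * u x ≤ |Δ ⇑φ x| * |u x| := (le_abs_self _).trans (abs_mul _ _).le
        _ ≤ |Δ ⇑φ x| * M := mul_le_mul_of_nonneg_left (hbd x hx) (abs_nonneg _)
        _ = M * |Δ ⇑φ x| := mul_comm _ _
    · simp [image_eq_zero_of_notMem_tsupport fun h => hx (hΔφU h)]
  calc ∫ x in ball x₀ r, Δ u x ∂μ = ∫ x in ball x₀ r, φ x * Δ u x ∂μ :=
        setIntegral_congr_fun measurableSet_ball fun x hx => by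
          rw [φ.one_of_mem_closedBall (ball_subset_closedBall hx), one_mul]
    _ ≤ ∫ x, φ x * Δ u x ∂μ := setIntegral_le_integral hφΔu (.of_forall hφΔu_nonneg)
    _ = ∫ x, Δ ⇑φ x * u x ∂μ :=
        integral_mul_laplacian_eq_integral_laplacian_mul hU hφ φ.hasCompactSupport hφU hu
    _ ≤ ∫ x, M * |Δ ⇑φ x| ∂μ := integral_mono hΔφu hΔφ hΔφu_le
    _ = M * r ^ ((finrank ℝ E : ℝ) - 2) * ∫ x, |Δ (ballCutoff (0 : E) one_pos : E → ℝ) x| ∂μ := by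
        rw [integral_const_mul, show ⇑φ = fun x => ballCutoff (0 : E) one_pos (r⁻¹ • (x - x₀))
          from funext (ballCutoff_apply x₀ hr), integral_abs_laplacian_comp_smul_sub
          (ContDiffBump.contDiff _) hr, mul_assoc]

end Cutoff

theorem laplacian_eq_laplacian {n : ℕ} (u : EuclideanSpace ℝ (Fin n) → ℝ) :
    laplacian u = Δ u := by
  ext x
  simp [laplacian,
    laplacian_eq_iteratedFDeriv_orthonormalBasis u (EuclideanSpace.basisFun (Fin n) ℝ)]

theorem stmt4_general {n : ℕ} :
    ∃ C₀ : ℝ, 0 < C₀ ∧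
      ∀ (x₀ : EuclideanSpace ℝ (Fin n)) (r M : ℝ), 0 < r → 0 ≤ M →
        ∀ u : EuclideanSpace ℝ (Fin n) → ℝ,
          ContDiffOn ℝ 2 u (ball x₀ (2 * r)) →
          (∀ x ∈ ball x₀ (2 * r), 0 ≤ laplacian u x) →
          (∀ x ∈ ball x₀ (2 * r), 0 ≤ u x ∧ u x ≤ M) →
          ∫ x in ball x₀ r, laplacian u x ≤ C₀ * M * r ^ ((n : ℝ) - 2) := by
  set K := ∫ x, |Δ (ballCutoff (0 : EuclideanSpace ℝ (Fin n)) one_pos :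
    EuclideanSpace ℝ (Fin n) → ℝ) x|
  have hK : 0 ≤ K := integral_nonneg fun _ => abs_nonneg _
  refine ⟨1 + K, by positivity, fun x₀ r M hr hM u hu hΔu hbd => ?_⟩
  simp only [laplacian_eq_laplacian] at hΔu ⊢
  have hbound := integral_laplacian_ball_le (μ := volume) hr hu hΔu
    fun x hx => abs_le.2 ⟨by linarith [(hbd x hx).1], (hbd x hx).2⟩
  rw [finrank_euclideanSpace_fin] at hbound
  have hMr : 0 ≤ M * r ^ ((n : ℝ) - 2) := by positivity
  exact hbound.trans (by nlinarith)

/-- Lemma 3.1: for a subharmonic function `u` with `0 ≤ u ≤ M` on `B(x₀, 2r)`,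
the integral of `Δu` over `B(x₀, r)` is bounded by `C₀ · M · r^(n−2)`,
with `C₀` depending only on the dimension `n ≥ 3`. -/
theorem stmt4 {n : ℕ} (hn : 3 ≤ n) :
    ∃ C₀ : ℝ, 0 < C₀ ∧
      ∀ (x₀ : EuclideanSpace ℝ (Fin n)) (r M : ℝ), 0 < r → 0 ≤ M →
        ∀ u : EuclideanSpace ℝ (Fin n) → ℝ,
          ContDiffOn ℝ 2 u (ball x₀ (2 * r)) →
          (∀ x ∈ ball x₀ (2 * r), 0 ≤ laplacian u x) →
          (∀ x ∈ ball x₀ (2 * r), 0 ≤ u x ∧ u x ≤ M) →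
          ∫ x in ball x₀ r, laplacian u x ≤ C₀ * M * r ^ ((n : ℝ) - 2) :=
  stmt4_general
end

section
/- Let Ω ⊆ ℝⁿ be an open set (n ≥ 3), m ≥ 2, M ≥ 0, C > 0, 0 < β ≤ 1. Let (ε_k) be a sequence of positive real numbers converging to 0, and for each k let u_1^k,…,u_m^k be twice continuously differentiable functions on Ω such that for all i, k and all x, y ∈ Ω: 0 ≤ u_i^k(x) ≤ M, |u_i^k(x) − u_i^k(y)| ≤ C·|x − y|^β, and Δu_i^k(x) = (1/ε_k)·∏_{j=1}^m u_j^k(x). Suppose that for each i the sequence u_i^k converges pointwise on Ω to a function u_i as k → ∞. Then ∏_{i=1}^m u_i(x) = 0 for every x ∈ Ω. -/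
/-!
If `∏ i, v i x₀ > 0`, all limits `v j x₀` exceed some `δ > 0`. By the uniform Hölder bound, for
all large `k` every `u k j` stays above `δ / 2` on a fixed ball `closedBall x₀ r`, so there
`Δ (u k i) ≥ (δ / 2) ^ m / ε k`, which tends to infinity.

This is impossible for functions with values in `[0, M]`: if `Δ u ≥ A` on a ball of radius `r` with
`A r² > 2 n M`, pick `M / r² < c < A / (2 n)`. Then `u - c ‖· - x₀‖²` has positive Laplacian, so it
has no interior maximum (the Hessian is negative semidefinite there) and attains its maximum over
the closed ball on the sphere, where it is below `M - c r² < 0 ≤ u x₀`.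
-/

open MeasureTheory Metric Finset

open Filter Topology InnerProductSpace
open scoped Laplacian

-- A local maximum failing this test would also be a local minimum, so `g` would be locally
-- constant and `deriv (deriv g) t = 0`.
theorem IsLocalMax.deriv_deriv_nonpos {g : ℝ → ℝ} {t : ℝ} (h : IsLocalMax g t)
    (hg : ContinuousAt g t) : deriv (deriv g) t ≤ 0 := by
  by_contra! hpos
  have hmin : IsLocalMin g t := isLocalMin_of_deriv_deriv_pos hpos h.deriv_eq_zero hg
  have hconst : g =ᶠ[𝓝 t] fun _ ↦ g t := (h.and hmin).mono fun _ hs ↦ le_antisymm hs.1 hs.2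
  simp [hconst.deriv.deriv_eq] at hpos

theorem IsLocalMax.iteratedFDeriv_two_nonpos {E : Type*} [NormedAddCommGroup E]
    [NormedSpace ℝ E] {f : E → ℝ} {z : E} (h : IsLocalMax f z) (hf : ContDiffAt ℝ 2 f z)
    (v : E) : iteratedFDeriv ℝ 2 f z ![v, v] ≤ 0 := by
  have hline : Continuous fun t : ℝ ↦ z + t • v := by fun_prop
  have hmax : IsLocalMax (fun t : ℝ ↦ f (z + t • v)) 0 :=
    IsLocalMax.comp_continuous (by simpa using h) hline.continuousAt
  have hcont : ContinuousAt (fun t : ℝ ↦ f (z + t • v)) 0 :=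
    ContinuousAt.comp (by simpa using hf.continuousAt) hline.continuousAt
  have hderiv : deriv (fun t : ℝ ↦ f (z + t • v)) =ᶠ[𝓝 0]
      fun t ↦ iteratedFDeriv ℝ 1 f (z + t • v) (fun _ ↦ v) := by
    have hnear : ∀ᶠ t in 𝓝 (0 : ℝ), ContDiffAt ℝ 2 f (z + t • v) :=
      hline.continuousAt.eventually (by simpa using hf.eventually (by simp))
    filter_upwards [hnear] with t ht
    rw [iteratedFDeriv_one_apply, (ht.differentiableAt (by simp)).deriv_comp_add_smul]
  have hsecond := ContDiffAt.deriv_fderiv_add_smul (n := 1) (t := (0 : ℝ)) (x := z) (y := v)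
    (by norm_num; exact hf)
  have hvv : (![v, v] : Fin 2 → E) = fun _ ↦ v := by
    ext i; fin_cases i <;> rfl
  have key := hmax.deriv_deriv_nonpos hcont
  rw [hderiv.deriv_eq, hsecond, zero_smul, add_zero] at key
  rwa [hvv]

section FiniteDimensional

variable {E : Type*} [NormedAddCommGroup E] [InnerProductSpace ℝ E] [FiniteDimensional ℝ E]
  {x₀ : E} {r : ℝ}

theorem IsLocalMax.laplacian_nonpos {f : E → ℝ} {z : E} (h : IsLocalMax f z)
    (hf : ContDiffAt ℝ 2 f z) : Δ f z ≤ 0 := by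
  rw [laplacian_eq_iteratedFDeriv_stdOrthonormalBasis]
  exact Finset.sum_nonpos fun i _ ↦ h.iteratedFDeriv_two_nonpos hf _

theorem laplacian_norm_sub_sq (x₀ x : E) :
    Δ (fun y ↦ ‖y - x₀‖ ^ 2) x = 2 * Module.finrank ℝ E := by
  have hsecond (v : E) :
      iteratedFDeriv ℝ 2 (fun y ↦ ‖y - x₀‖ ^ 2) x ![v, v] = 2 * ‖v‖ ^ 2 := by
    rw [iteratedFDeriv_comp_sub (f := fun y : E ↦ ‖y‖ ^ 2), iteratedFDeriv_two_apply,
      fderiv_norm_sq, ← FunLike.coe_smul, ContinuousLinearMap.fderiv]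
    simp only [Matrix.cons_val_zero, Matrix.cons_val_one, smul_apply]
    rw [innerSL_apply_apply, real_inner_self_eq_norm_sq, nsmul_eq_mul, Nat.cast_ofNat]
  simp [laplacian_eq_iteratedFDeriv_stdOrthonormalBasis, hsecond, mul_comm]

theorem exists_mem_sphere_isMaxOn_of_laplacian_pos {w : E → ℝ} (hr : 0 ≤ r)
    (hcont : ContinuousOn w (closedBall x₀ r)) (hw : ∀ y ∈ ball x₀ r, ContDiffAt ℝ 2 w y)
    (hΔ : ∀ y ∈ ball x₀ r, 0 < Δ w y) : ∃ z ∈ sphere x₀ r, IsMaxOn w (closedBall x₀ r) z := by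
  obtain ⟨z, hz, hmax⟩ := (isCompact_closedBall x₀ r).exists_isMaxOn
    ⟨x₀, mem_closedBall_self hr⟩ hcont
  refine ⟨z, ?_, hmax⟩
  rw [← closedBall_sdiff_ball]
  refine ⟨hz, fun hz_ball ↦ ?_⟩
  have hloc : IsLocalMax w z := hmax.isLocalMax (closedBall_mem_nhds_of_mem hz_ball)
  exact (hΔ z hz_ball).not_ge (hloc.laplacian_nonpos (hw z hz_ball))

theorem mul_sq_le_of_le_laplacian {u : E → ℝ} {M A : ℝ} (hr : 0 < r)
    (hu : ∀ y ∈ closedBall x₀ r, ContDiffAt ℝ 2 u y) (hu₀ : 0 ≤ u x₀)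
    (huM : ∀ y ∈ sphere x₀ r, u y ≤ M) (hA : ∀ y ∈ ball x₀ r, A ≤ Δ u y) :
    A * r ^ 2 ≤ 2 * Module.finrank ℝ E * M := by
  set d : ℝ := (Module.finrank ℝ E : ℝ)
  by_contra! hlt
  -- `c r² = M + t` with `t = (A r² - 2 d M) / (2 d + 1)`, which also works when `d = 0`.
  obtain ⟨c, hcM, hcA⟩ : ∃ c, M < c * r ^ 2 ∧ 2 * d * c < A := by
    have hd : 0 ≤ d := Nat.cast_nonneg _
    refine ⟨(M + (A * r ^ 2 - 2 * d * M) / (2 * d + 1)) / r ^ 2, ?_, ?_⟩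
    · rw [div_mul_cancel₀ _ (by positivity)]
      have : 0 < (A * r ^ 2 - 2 * d * M) / (2 * d + 1) := div_pos (by linarith) (by linarith)
      linarith
    · rw [← mul_lt_mul_iff_of_pos_right (pow_pos hr 2)]
      field_simp
      nlinarith
  set q : E → ℝ := fun y ↦ ‖y - x₀‖ ^ 2
  have hq : ContDiff ℝ 2 q := (contDiff_norm_sq ℝ).comp (contDiff_id.sub contDiff_const)
  have hcq : ContDiff ℝ 2 (c • q) := hq.const_smul c
  set w := u - c • q
  have hwΔ : ∀ y ∈ ball x₀ r, 0 < Δ w y := fun y hy ↦ by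
    rw [(hu y (ball_subset_closedBall hy)).laplacian_sub hcq.contDiffAt,
      laplacian_smul c hq.contDiffAt, laplacian_norm_sub_sq, smul_eq_mul]
    linarith [hA y hy]
  obtain ⟨z, hz, hmax⟩ := exists_mem_sphere_isMaxOn_of_laplacian_pos hr.le
    (fun y hy ↦ ((hu y hy).sub hcq.contDiffAt).continuousAt.continuousWithinAt)
    (fun y hy ↦ (hu y (ball_subset_closedBall hy)).sub hcq.contDiffAt) hwΔ
  have hwz : w z = u z - c * r ^ 2 := by
    simp [w, q, ← dist_eq_norm, mem_sphere.1 hz]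
  have hwx₀ : w x₀ = u x₀ := by simp [w, q]
  have hle : w x₀ ≤ w z := hmax (mem_closedBall_self hr.le)
  linarith [huM z hz]

end FiniteDimensional

theorem exists_pos_forall_lt {ι : Type*} [Finite ι] {a : ι → ℝ} (ha : ∀ i, 0 < a i) :
    ∃ δ > 0, ∀ i, δ < a i := by
  have h : ∀ᶠ δ in 𝓝[>] (0 : ℝ), ∀ i, δ < a i :=
    eventually_all.2 fun i ↦ nhdsWithin_le_nhds (eventually_lt_nhds (ha i))
  obtain ⟨δ, hlt, hδ⟩ := (h.and self_mem_nhdsWithin).exists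
  exact ⟨δ, hδ, hlt⟩

theorem exists_closedBall_subset_and_mul_norm_rpow_lt {E : Type*} [NormedAddCommGroup E]
    {Ω : Set E} (hΩ : IsOpen Ω) {x₀ : E} (hx₀ : x₀ ∈ Ω) (C : ℝ) {β η : ℝ} (hβ : 0 < β)
    (hη : 0 < η) : ∃ r > 0, closedBall x₀ r ⊆ {x | x ∈ Ω ∧ C * ‖x₀ - x‖ ^ β < η} := by
  have hcont : Continuous fun x ↦ C * ‖x₀ - x‖ ^ β :=
    ((continuous_const.sub continuous_id).norm.rpow_const fun _ ↦ Or.inr hβ.le).const_mul C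
  have hsmall : ∀ᶠ x in 𝓝 x₀, C * ‖x₀ - x‖ ^ β < η :=
    (hcont.tendsto x₀).eventually (eventually_lt_nhds (by simpa [Real.zero_rpow hβ.ne'] using hη))
  exact nhds_basis_closedBall.mem_iff.1 (inter_mem (hΩ.mem_nhds hx₀) hsmall)

theorem laplacian_eq_innerProductSpace_laplacian {n : ℕ} (u : EuclideanSpace ℝ (Fin n) → ℝ)
    (x : EuclideanSpace ℝ (Fin n)) : laplacian u x = Δ u x := by
  rw [laplacian_eq_iteratedFDeriv_orthonormalBasis u (EuclideanSpace.basisFun (Fin n) ℝ)]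
  simp [laplacian]

theorem inv_mul_pow_mul_sq_le {n m : ℕ} {Ω : Set (EuclideanSpace ℝ (Fin n))} (hΩ : IsOpen Ω)
    {w : Fin m → EuclideanSpace ℝ (Fin n) → ℝ} {ε M a r : ℝ} {x₀ : EuclideanSpace ℝ (Fin n)}
    (i : Fin m) (hε : 0 < ε) (hw : ContDiffOn ℝ 2 (w i) Ω)
    (hw_bd : ∀ x ∈ Ω, 0 ≤ w i x ∧ w i x ≤ M)
    (hw_eq : ∀ x ∈ Ω, laplacian (w i) x = (1 / ε) * ∏ j, w j x)
    (hr : 0 < r) (hball : closedBall x₀ r ⊆ Ω) (ha : 0 ≤ a)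
    (hlow : ∀ x ∈ closedBall x₀ r, ∀ j, a ≤ w j x) :
    ε⁻¹ * a ^ m * r ^ 2 ≤ 2 * n * M := by
  have hΔ : ∀ x ∈ ball x₀ r, ε⁻¹ * a ^ m ≤ Δ (w i) x := fun x hx ↦ by
    have hx' := ball_subset_closedBall hx
    rw [← laplacian_eq_innerProductSpace_laplacian, hw_eq x (hball hx'), one_div]
    gcongr
    calc a ^ m = ∏ _j : Fin m, a := (Fin.prod_const m a).symm
      _ ≤ ∏ j, w j x := Finset.prod_le_prod (fun _ _ ↦ ha) fun j _ ↦ hlow x hx' j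
  simpa using mul_sq_le_of_le_laplacian hr (fun y hy ↦ hw.contDiffAt (hΩ.mem_nhds (hball hy)))
    (hw_bd x₀ (hball (mem_closedBall_self hr.le))).1
    (fun y hy ↦ (hw_bd y (hball (sphere_subset_closedBall hy))).2) hΔ

theorem stmt6_general {n : ℕ}
    (Ω : Set (EuclideanSpace ℝ (Fin n))) (hΩo : IsOpen Ω)
    (m : ℕ) (hm : 2 ≤ m) (M C β : ℝ)
    (hβ0 : 0 < β)
    (ε : ℕ → ℝ) (hε_pos : ∀ k, 0 < ε k)
    (hε_lim : Filter.Tendsto ε Filter.atTop (nhds 0))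
    (u : ℕ → Fin m → EuclideanSpace ℝ (Fin n) → ℝ)
    (hu_smooth : ∀ k i, ContDiffOn ℝ 2 (u k i) Ω)
    (hu_bd : ∀ k i, ∀ x ∈ Ω, 0 ≤ u k i x ∧ u k i x ≤ M)
    (hu_holder : ∀ k i, ∀ x ∈ Ω, ∀ y ∈ Ω,
      |u k i x - u k i y| ≤ C * ‖x - y‖ ^ β)
    (hu_eq : ∀ k i, ∀ x ∈ Ω,
      laplacian (u k i) x = (1 / ε k) * ∏ j, u k j x)
    (v : Fin m → EuclideanSpace ℝ (Fin n) → ℝ)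
    (hconv : ∀ i, ∀ x ∈ Ω,
      Filter.Tendsto (fun k => u k i x) Filter.atTop (nhds (v i x))) :
    ∀ x ∈ Ω, ∏ i, v i x = 0 := by
  intro x₀ hx₀
  by_contra hprod
  have hv_pos (i : Fin m) : 0 < v i x₀ :=
    (ge_of_tendsto' (hconv i x₀ hx₀) fun k ↦ (hu_bd k i x₀ hx₀).1).lt_of_ne'
      (Finset.prod_ne_zero_iff.1 hprod i (Finset.mem_univ i))
  obtain ⟨δ, hδ, hvδ⟩ := exists_pos_forall_lt hv_pos
  obtain ⟨r, hr, hball⟩ :=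
    exists_closedBall_subset_and_mul_norm_rpow_lt hΩo hx₀ C hβ0 (half_pos hδ)
  have hinv : Tendsto (fun k ↦ (ε k)⁻¹) atTop atTop :=
    (tendsto_nhdsWithin_iff.2 ⟨hε_lim, .of_forall hε_pos⟩).inv_tendsto_nhdsGT_zero
  obtain ⟨k, hk_u, hk_ε⟩ := ((eventually_all.2 fun j ↦ (hconv j x₀ hx₀).eventually
    (lt_mem_nhds (hvδ j))).and ((hinv.atTop_mul_const (by positivity : 0 < (δ / 2) ^ m * r ^ 2))
      |>.eventually_gt_atTop (2 * n * M))).exists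
  have hlow : ∀ x ∈ closedBall x₀ r, ∀ j, δ / 2 ≤ u k j x := fun x hx j ↦ by
    obtain ⟨hxΩ, hxC⟩ := hball hx
    linarith [(abs_le.1 (hu_holder k j x₀ hx₀ x hxΩ)).2, hk_u j]
  have hbound := inv_mul_pow_mul_sq_le hΩo ⟨0, by omega⟩ (hε_pos k) (hu_smooth k _) (hu_bd k _)
    (hu_eq k _) hr (fun x hx ↦ (hball hx).1) (by positivity) hlow
  linarith [mul_assoc (ε k)⁻¹ ((δ / 2) ^ m) (r ^ 2)]

/-- Segregation in the singular limit: for uniformly bounded, uniformly Hölder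
continuous solutions of `Δu_i = (1/ε_k) · ∏_j u_j` with `ε_k → 0`, any pointwise
limit satisfies `∏_i u_i = 0` everywhere in `Ω`. -/
theorem stmt6 {n : ℕ} (hn : 3 ≤ n)
    (Ω : Set (EuclideanSpace ℝ (Fin n))) (hΩo : IsOpen Ω)
    (m : ℕ) (hm : 2 ≤ m) (M C β : ℝ) (hM : 0 ≤ M) (hC : 0 < C)
    (hβ0 : 0 < β) (hβ1 : β ≤ 1)
    (ε : ℕ → ℝ) (hε_pos : ∀ k, 0 < ε k)
    (hε_lim : Filter.Tendsto ε Filter.atTop (nhds 0))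
    (u : ℕ → Fin m → EuclideanSpace ℝ (Fin n) → ℝ)
    (hu_smooth : ∀ k i, ContDiffOn ℝ 2 (u k i) Ω)
    (hu_bd : ∀ k i, ∀ x ∈ Ω, 0 ≤ u k i x ∧ u k i x ≤ M)
    (hu_holder : ∀ k i, ∀ x ∈ Ω, ∀ y ∈ Ω,
      |u k i x - u k i y| ≤ C * ‖x - y‖ ^ β)
    (hu_eq : ∀ k i, ∀ x ∈ Ω,
      laplacian (u k i) x = (1 / ε k) * ∏ j, u k j x)
    (v : Fin m → EuclideanSpace ℝ (Fin n) → ℝ)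
    (hconv : ∀ i, ∀ x ∈ Ω,
      Filter.Tendsto (fun k => u k i x) Filter.atTop (nhds (v i x))) :
    ∀ x ∈ Ω, ∏ i, v i x = 0 :=
  stmt6_general Ω hΩo m hm M C β hβ0 ε hε_pos hε_lim u hu_smooth hu_bd hu_holder hu_eq v hconv
end

section
/- Let Ω ⊆ ℝⁿ be an open set and M ≥ 0. Let (u_k) be a sequence of twice continuously differentiable functions on Ω with Δu_k(x) ≥ 0 and 0 ≤ u_k(x) ≤ M for all k and all x ∈ Ω, and suppose u_k converges pointwise on Ω to a function u. Then for every smooth function φ : ℝⁿ → ℝ that is nonnegative and has compact support contained in Ω, one has ∫_Ω u(x)·Δφ(x) dx ≥ 0. -/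
open MeasureTheory Metric Finset

section aux

variable {E : Type*} [NormedAddCommGroup E] [NormedSpace ℝ E] [MeasurableSpace E] [BorelSpace E]
  [FiniteDimensional ℝ E] {μ : Measure E} [μ.IsAddHaarMeasure]


variable {E : Type*} [NormedAddCommGroup E] [NormedSpace ℝ E] [MeasurableSpace E] [BorelSpace E]
  [FiniteDimensional ℝ E] {μ : Measure E} [μ.IsAddHaarMeasure]

lemma cts_int {F G : E → ℝ} (hFc : HasCompactSupport F) (hGc : HasCompactSupport G)
    {h : E → ℝ} (hh : Continuous h) (hsupp : Function.support h ⊆ tsupport F ∪ tsupport G) :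
    Integrable h μ := by
  apply hh.integrable_of_hasCompactSupport
  exact IsCompact.of_isClosed_subset (hFc.union hGc) isClosed_closure
    (closure_minimal hsupp (hFc.isCompact.isClosed.union hGc.isCompact.isClosed))

lemma ibp_dir {F G : E → ℝ} (hF : ContDiff ℝ 2 F) (hG : ContDiff ℝ 2 G)
    (hFc : HasCompactSupport F) (hGc : HasCompactSupport G) (v : E) :
    ∫ x, F x * (fderiv ℝ (fderiv ℝ G) x v v) ∂μ
      = ∫ x, (fderiv ℝ (fderiv ℝ F) x v v) * G x ∂μ := by
  have h12 : (1 : WithTop ℕ∞) + 1 ≤ 2 := by norm_num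
  set F' : E → ℝ := fun x => fderiv ℝ F x v with hF'def
  set G' : E → ℝ := fun x => fderiv ℝ G x v with hG'def
  have hFd1 : ContDiff ℝ 1 (fderiv ℝ F) := hF.fderiv_right h12
  have hGd1 : ContDiff ℝ 1 (fderiv ℝ G) := hG.fderiv_right h12
  have hF' : ContDiff ℝ 1 F' := hFd1.clm_apply contDiff_const
  have hG' : ContDiff ℝ 1 G' := hGd1.clm_apply contDiff_const
  have hdF' : ∀ x, fderiv ℝ F' x v = fderiv ℝ (fderiv ℝ F) x v v := by
    intro x
    rw [hF'def, fderiv_clm_apply (hFd1.differentiable one_ne_zero x) (differentiableAt_const v)]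
    simp
  have hdG' : ∀ x, fderiv ℝ G' x v = fderiv ℝ (fderiv ℝ G) x v v := by
    intro x
    rw [hG'def, fderiv_clm_apply (hGd1.differentiable one_ne_zero x) (differentiableAt_const v)]
    simp
  have hcF : Continuous F := hF.continuous
  have hcG : Continuous G := hG.continuous
  have hcF' : Continuous F' := hF'.continuous
  have hcG' : Continuous G' := hG'.continuous
  have hcDF : Continuous fun x => fderiv ℝ (fderiv ℝ F) x v v :=
    ((hFd1.continuous_fderiv one_ne_zero).clm_apply continuous_const).clm_apply continuous_const
  have hcDG : Continuous fun x => fderiv ℝ (fderiv ℝ G) x v v :=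
    ((hGd1.continuous_fderiv one_ne_zero).clm_apply continuous_const).clm_apply continuous_const
  have hsF' : Function.support F' ⊆ tsupport F := fun x hx => by
    have h1 : x ∈ Function.support (fderiv ℝ F) := by
      intro h; exact hx (by simp [hF'def, Function.mem_support.mp, h])
    exact support_fderiv_subset ℝ h1
  have hsG' : Function.support G' ⊆ tsupport G := fun x hx => by
    have h1 : x ∈ Function.support (fderiv ℝ G) := by
      intro h; exact hx (by simp [hG'def, h])
    exact support_fderiv_subset ℝ h1
  have tsub : ∀ {H : E → ℝ}, tsupport (fderiv ℝ H) ⊆ tsupport H := fun {H} =>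
    closure_minimal (support_fderiv_subset ℝ) isClosed_closure
  have hsDF : Function.support (fun x => fderiv ℝ (fderiv ℝ F) x v v) ⊆ tsupport F := by
    intro x hx
    have h1 : x ∈ Function.support (fderiv ℝ (fderiv ℝ F)) := by
      intro h; exact hx (by simp [h])
    exact tsub (support_fderiv_subset ℝ h1)
  have hsDG : Function.support (fun x => fderiv ℝ (fderiv ℝ G) x v v) ⊆ tsupport G := by
    intro x hx
    have h1 : x ∈ Function.support (fderiv ℝ (fderiv ℝ G)) := by
      intro h; exact hx (by simp [h])
    exact tsub (support_fderiv_subset ℝ h1)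
  have int1 : Integrable (fun x => F' x * G' x) μ :=
    cts_int hFc hGc (hcF'.mul hcG')
      (fun x hx => Or.inl (hsF' (fun h => hx (by simp [Function.mem_support.mp, h]))))
  have int2 : Integrable (fun x => F x * fderiv ℝ (fderiv ℝ G) x v v) μ :=
    cts_int hFc hGc (hcF.mul hcDG)
      (fun x hx => Or.inr (hsDG (fun h => hx (by simp [h]))))
  have int3 : Integrable (fun x => F x * G' x) μ :=
    cts_int hFc hGc (hcF.mul hcG') (fun x hx => Or.inr (hsG' (fun h => hx (by simp [h]))))
  have int4 : Integrable (fun x => fderiv ℝ (fderiv ℝ F) x v v * G x) μ :=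
    cts_int hFc hGc (hcDF.mul hcG) (fun x hx => Or.inl (hsDF (fun h => hx (by simp [h]))))
  have int5 : Integrable (fun x => F' x * G x) μ :=
    cts_int hFc hGc (hcF'.mul hcG) (fun x hx => Or.inl (hsF' (fun h => hx (by simp [h]))))
  have ibp1 : ∫ x, F x * fderiv ℝ G' x v ∂μ = - ∫ x, fderiv ℝ F x v * G' x ∂μ :=
    integral_mul_fderiv_eq_neg_fderiv_mul_of_integrable int1 (by simpa [hdG'] using int2) int3
      (fun x _ => hF.differentiable (by norm_num) x) (fun x _ => hG'.differentiable one_ne_zero x)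
  have ibp2 : ∫ x, F' x * fderiv ℝ G x v ∂μ = - ∫ x, fderiv ℝ F' x v * G x ∂μ :=
    integral_mul_fderiv_eq_neg_fderiv_mul_of_integrable (by simpa [hdF'] using int4) int1 int5
      (fun x _ => hF'.differentiable one_ne_zero x) (fun x _ => hG.differentiable (by norm_num) x)
  have e1 : ∫ x, F x * fderiv ℝ (fderiv ℝ G) x v v ∂μ = - ∫ x, F' x * G' x ∂μ := by
    simpa [hdG'] using ibp1
  have e2 : ∫ x, F' x * G' x ∂μ = - ∫ x, fderiv ℝ (fderiv ℝ F) x v v * G x ∂μ := by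
    simpa [hdF'] using ibp2
  rw [e1, e2, neg_neg]

end aux

lemma laplacian_eq {n : ℕ} (u : EuclideanSpace ℝ (Fin n) → ℝ) (x : EuclideanSpace ℝ (Fin n)) :
    laplacian u x = ∑ i, fderiv ℝ (fderiv ℝ u) x (EuclideanSpace.single i 1)
      (EuclideanSpace.single i 1) := by
  unfold laplacian
  refine Finset.sum_congr rfl fun i _ => ?_
  rw [iteratedFDeriv_two_apply]
  simp

lemma laplacian_continuous {n : ℕ} {u : EuclideanSpace ℝ (Fin n) → ℝ} (hu : ContDiff ℝ 2 u) :
    Continuous (laplacian u) := by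
  simp only [funext (laplacian_eq u)]
  exact continuous_finset_sum _ fun i _ =>
    (((hu.fderiv_right (by norm_num : (1 : WithTop ℕ∞) + 1 ≤ 2)).continuous_fderiv
      one_ne_zero).clm_apply continuous_const).clm_apply continuous_const

lemma laplacian_zero_of_nmem {n : ℕ} {u : EuclideanSpace ℝ (Fin n) → ℝ}
    {x : EuclideanSpace ℝ (Fin n)} (hx : x ∉ tsupport u) : laplacian u x = 0 := by
  unfold laplacian
  have : iteratedFDeriv ℝ 2 u x = 0 := by
    by_contra h
    exact hx (support_iteratedFDeriv_subset 2 (Function.mem_support.mpr h))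
  simp [this]

lemma laplacian_congr {n : ℕ} {u w : EuclideanSpace ℝ (Fin n) → ℝ}
    {x : EuclideanSpace ℝ (Fin n)} (h : u =ᶠ[nhds x] w) : laplacian u x = laplacian w x := by
  rw [laplacian_eq, laplacian_eq, (h.fderiv (𝕜 := ℝ)).fderiv_eq]

lemma ibp_lap {n : ℕ} {F G : EuclideanSpace ℝ (Fin n) → ℝ}
    (hF : ContDiff ℝ 2 F) (hG : ContDiff ℝ 2 G)
    (hFc : HasCompactSupport F) (hGc : HasCompactSupport G) :
    ∫ x, F x * laplacian G x = ∫ x, laplacian F x * G x := by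
  have h12 : (1 : WithTop ℕ∞) + 1 ≤ 2 := by norm_num
  have key : ∀ v : EuclideanSpace ℝ (Fin n),
      Integrable (fun x => F x * fderiv ℝ (fderiv ℝ G) x v v) volume ∧
      Integrable (fun x => fderiv ℝ (fderiv ℝ F) x v v * G x) volume := by
    intro v
    have hcDG : Continuous fun x => fderiv ℝ (fderiv ℝ G) x v v :=
      (((hG.fderiv_right h12).continuous_fderiv one_ne_zero).clm_apply continuous_const).clm_apply
        continuous_const
    have hcDF : Continuous fun x => fderiv ℝ (fderiv ℝ F) x v v :=
      (((hF.fderiv_right h12).continuous_fderiv one_ne_zero).clm_apply continuous_const).clm_apply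
        continuous_const
    constructor
    · exact cts_int hFc hGc (hF.continuous.mul hcDG)
        (fun x hx => Or.inl (subset_closure (fun h => hx (by simp [h]))))
    · exact cts_int hFc hGc (hcDF.mul hG.continuous)
        (fun x hx => Or.inr (subset_closure (fun h => hx (by simp [h]))))
  calc ∫ x, F x * laplacian G x
      = ∑ i, ∫ x, F x * fderiv ℝ (fderiv ℝ G) x (EuclideanSpace.single i 1)
          (EuclideanSpace.single i 1) := by
        simp_rw [laplacian_eq, Finset.mul_sum]
        exact integral_finset_sum _ (fun i _ => (key _).1)
    _ = ∑ i, ∫ x, fderiv ℝ (fderiv ℝ F) x (EuclideanSpace.single i 1)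
          (EuclideanSpace.single i 1) * G x :=
        Finset.sum_congr rfl fun i _ => ibp_dir hF hG hFc hGc _
    _ = ∫ x, laplacian F x * G x := by
        simp_rw [laplacian_eq, Finset.sum_mul]
        exact (integral_finset_sum _ (fun i _ => (key _).2)).symm

/-- The pointwise limit of a uniformly bounded sequence of subharmonic functions is
subharmonic in the sense of distributions: `∫ u · Δφ ≥ 0` for every nonnegative
smooth `φ` compactly supported in `Ω`. -/
theorem stmt7 {n : ℕ} (Ω : Set (EuclideanSpace ℝ (Fin n))) (hΩo : IsOpen Ω)
    (M : ℝ) (hM : 0 ≤ M)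
    (u : ℕ → EuclideanSpace ℝ (Fin n) → ℝ)
    (hu_smooth : ∀ k, ContDiffOn ℝ 2 (u k) Ω)
    (hu_sub : ∀ k, ∀ x ∈ Ω, 0 ≤ laplacian (u k) x)
    (hu_bd : ∀ k, ∀ x ∈ Ω, 0 ≤ u k x ∧ u k x ≤ M)
    (v : EuclideanSpace ℝ (Fin n) → ℝ)
    (hconv : ∀ x ∈ Ω, Filter.Tendsto (fun k => u k x) Filter.atTop (nhds (v x))) :
    ∀ φ : EuclideanSpace ℝ (Fin n) → ℝ, ContDiff ℝ (⊤ : ℕ∞) φ → (∀ x, 0 ≤ φ x) →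
      HasCompactSupport φ → tsupport φ ⊆ Ω →
      0 ≤ ∫ x in Ω, v x * laplacian φ x := by
  intro φ hφ hφ0 hφc hφΩ
  have hφ2 : ContDiff ℝ 2 φ := hφ.of_le (show ((2 : ℕ∞) : WithTop ℕ∞) ≤ ((⊤ : ℕ∞) : WithTop ℕ∞) from WithTop.coe_le_coe.mpr le_top)
  -- cutoff function
  obtain ⟨K, hKc, hsubK, hKΩ⟩ := exists_compact_between hφc hΩo hφΩ
  obtain ⟨ψ, hψ1, hψ0, hψmem⟩ :=
    exists_contMDiffMap_one_nhds_of_subset_interior (modelWithCornersSelf ℝ (EuclideanSpace ℝ (Fin n)))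
      (n := (⊤ : ℕ∞))
      (isClosed_tsupport φ) hsubK
  have hψC : ContDiff ℝ (⊤ : ℕ∞) ψ := contMDiff_iff_contDiff.mp ψ.contMDiff
  have hψsupp : tsupport ψ ⊆ K :=
    closure_minimal (fun x hx => by_contra fun h => hx (hψ0 x h)) hKc.isClosed
  have hψcs : HasCompactSupport ψ := IsCompact.of_isClosed_subset hKc isClosed_closure hψsupp
  obtain ⟨V, hVo, hφV, hV1⟩ := eventually_nhdsSet_iff_exists.mp hψ1
  -- the truncated functions
  set f : ℕ → EuclideanSpace ℝ (Fin n) → ℝ := fun k x => ψ x * u k x with hfdef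
  have hfC : ∀ k, ContDiff ℝ 2 (f k) := by
    intro k
    rw [contDiff_iff_contDiffAt]
    intro x
    by_cases hx : x ∈ Ω
    · exact ((hψC.of_le (by norm_cast)).contDiffAt).mul
        ((hu_smooth k).contDiffAt (hΩo.mem_nhds hx))
    · have hx' : x ∉ tsupport ψ := fun h => hx (hKΩ (hψsupp h))
      have hev : f k =ᶠ[nhds x] (fun _ => (0 : ℝ)) :=
        Filter.eventually_of_mem ((isClosed_tsupport ψ).isOpen_compl.mem_nhds hx')
          (fun y hy => by simp [hfdef, image_eq_zero_of_notMem_tsupport hy])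
      exact contDiffAt_const.congr_of_eventuallyEq hev
  have hfc : ∀ k, HasCompactSupport (f k) := by
    intro k
    refine IsCompact.of_isClosed_subset hψcs isClosed_closure
      (closure_minimal (fun x hx => subset_closure ?_) (isClosed_tsupport ψ))
    intro h
    exact hx (by simp [hfdef, h])
  -- each approximating integral is nonnegative
  have hk : ∀ k, 0 ≤ ∫ x in Ω, u k x * laplacian φ x := by
    intro k
    have hpt : ∀ x, u k x * laplacian φ x = f k x * laplacian φ x := by
      intro x
      by_cases hx : x ∈ tsupport φ
      · simp [hfdef, hV1 x (hφV hx)]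
      · simp [laplacian_zero_of_nmem hx]
    have e1 : ∫ x in Ω, u k x * laplacian φ x = ∫ x, f k x * laplacian φ x := by
      simp_rw [hpt]
      exact setIntegral_eq_integral_of_forall_compl_eq_zero fun x hx => by
        simp [laplacian_zero_of_nmem (fun h => hx (hφΩ h))]
    rw [e1, ibp_lap (hfC k) hφ2 (hfc k) hφc]
    refine integral_nonneg fun x => ?_
    by_cases hx : x ∈ Function.support φ
    · have hxs : x ∈ tsupport φ := subset_closure hx
      have hxW : x ∈ V ∩ Ω := ⟨hφV hxs, hφΩ hxs⟩
      have hlapeq : laplacian (f k) x = laplacian (u k) x :=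
        laplacian_congr (Filter.eventually_of_mem ((hVo.inter hΩo).mem_nhds hxW)
          (fun y hy => by simp [hfdef, hV1 y hy.1]))
      exact mul_nonneg (hlapeq ▸ hu_sub k x hxW.2) (hφ0 x)
    · simp [Function.notMem_support.mp hx]
  -- pass to the limit by dominated convergence
  have hlapc : Continuous (laplacian φ) := laplacian_continuous hφ2
  have hlapcs : HasCompactSupport (laplacian φ) :=
    IsCompact.of_isClosed_subset hφc isClosed_closure
      (closure_minimal (fun x hx => by_contra fun h =>
        hx (laplacian_zero_of_nmem h)) (isClosed_tsupport φ))
  have bound_int : Integrable (fun x => M * |laplacian φ x|) (volume.restrict Ω) :=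
    ((hlapc.abs.integrable_of_hasCompactSupport
      (hlapcs.comp_left (g := fun t : ℝ => |t|) abs_zero)).restrict).const_mul M
  have hmeas : ∀ k, AEStronglyMeasurable (fun x => u k x * laplacian φ x)
      (volume.restrict Ω) := fun k =>
    (((hu_smooth k).continuousOn.mul hlapc.continuousOn).aestronglyMeasurable hΩo.measurableSet)
  have hbd : ∀ k, ∀ᵐ x ∂(volume.restrict Ω),
      ‖u k x * laplacian φ x‖ ≤ M * |laplacian φ x| := by
    intro k
    refine (ae_restrict_iff' hΩo.measurableSet).mpr (Filter.Eventually.of_forall fun x hx => ?_)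
    rw [Real.norm_eq_abs, abs_mul, abs_of_nonneg (hu_bd k x hx).1]
    exact mul_le_mul_of_nonneg_right (hu_bd k x hx).2 (abs_nonneg _)
  have hlim : ∀ᵐ x ∂(volume.restrict Ω), Filter.Tendsto (fun k => u k x * laplacian φ x)
      Filter.atTop (nhds (v x * laplacian φ x)) :=
    (ae_restrict_iff' hΩo.measurableSet).mpr (Filter.Eventually.of_forall fun x hx =>
      (hconv x hx).mul_const _)
  have := tendsto_integral_of_dominated_convergence _ hmeas bound_int hbd hlim
  exact ge_of_tendsto' this hk
end

section
/- Let n ≥ 3, let Ω ⊆ ℝⁿ be a bounded open set, let K ⊆ Ω be a compact set, let m ≥ 1 and M ≥ 0. Then there exists a constant C > 0, depending only on n, M, K and Ω (and not on ε), such that for every ε > 0 and every m-tuple of twice continuously differentiable functions u_1,…,u_m on Ω satisfying 0 ≤ u_i(x) ≤ M and Δu_i(x) = (1/ε)·∏_{j=1}^m u_j(x) for all i and x ∈ Ω, one has ∫_K (1/ε)·∏_{j=1}^m u_j(x) dx ≤ C. -/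
open MeasureTheory Metric Finset

/-! Each `Δu_i` equals the reaction term, so it suffices to bound `∫_K Δu` for one function `u`
with `|u| ≤ M` and `Δu ≥ 0` on `Ω`. For a smooth cutoff `φ` with `φ = 1` on `K` and compact
support in `Ω`, positivity of `Δu` and two integrations by parts give
`∫_K Δu ≤ ∫ φ Δu = ∫ Δφ u ≤ M ∫ |Δφ|`, a bound that depends on `K`, `Ω` and `M` only.
To integrate by parts over the whole space, `u` is replaced by `ψ u` for a second cutoff `ψ`
equal to `1` on the support of `φ`. -/

section

variable {E : Type*} [NormedAddCommGroup E] [NormedSpace ℝ E]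

open Manifold in
theorem exists_contDiff_cutoff [FiniteDimensional ℝ E] (k : ℕ∞) {K U : Set E} (hK : IsCompact K)
    (hU : IsOpen U) (hKU : K ⊆ U) :
    ∃ φ : E → ℝ, ContDiff ℝ k φ ∧ HasCompactSupport φ ∧ tsupport φ ⊆ U ∧ Set.EqOn φ 1 K ∧
      ∀ x, φ x ∈ Set.Icc 0 1 := by
  obtain ⟨L, hLc, hKL, hLU⟩ := exists_compact_between hK hU hKU
  obtain ⟨φ, hφ0, hφ1, hφ01⟩ := exists_contMDiffMap_zero_one_of_isClosed 𝓘(ℝ, E) (n := k)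
    isOpen_interior.isClosed_compl hK.isClosed (Set.disjoint_compl_left_iff_subset.2 hKL)
  have hφL : tsupport φ ⊆ L :=
    closure_minimal (fun x hx ↦ interior_subset (not_not.1 fun h ↦ hx (hφ0 h))) hLc.isClosed
  exact ⟨φ, contMDiff_iff_contDiff.1 φ.contMDiff, hLc.of_isClosed_subset (isClosed_tsupport _) hφL,
    hφL.trans hLU, hφ1, hφ01⟩

theorem contDiff_mul_of_tsupport_subset {ψ u : E → ℝ} {Ω : Set E} {k : WithTop ℕ∞}
    (hΩ : IsOpen Ω) (hψ : ContDiff ℝ k ψ) (hψΩ : tsupport ψ ⊆ Ω) (hu : ContDiffOn ℝ k u Ω) :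
    ContDiff ℝ k (fun x ↦ ψ x * u x) := by
  refine contDiff_iff_contDiffAt.2 fun x ↦ ?_
  by_cases hx : x ∈ Ω
  · exact (hψ.contDiffOn.mul hu).contDiffAt (hΩ.mem_nhds hx)
  · have hψx : ψ =ᶠ[nhds x] 0 := notMem_tsupport_iff_eventuallyEq.1 fun h ↦ hx (hψΩ h)
    refine contDiffAt_const (c := (0 : ℝ)).congr_of_eventuallyEq ?_
    filter_upwards [hψx] with y hy
    simp [hy]

theorem iteratedFDeriv_two_apply_self {g : E → ℝ} {x : E} (hg : DifferentiableAt ℝ (fderiv ℝ g) x)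
    (v : E) : iteratedFDeriv ℝ 2 g x ![v, v] = fderiv ℝ (fun y ↦ fderiv ℝ g y v) x v := by
  rw [iteratedFDeriv_two_apply, fderiv_clm_apply hg (differentiableAt_const v)]
  simp

variable [MeasurableSpace E] [BorelSpace E] {μ : Measure E} [μ.IsAddHaarMeasure]
  [FiniteDimensional ℝ E]

theorem integral_mul_fderiv_apply_eq_neg {φ g : E → ℝ} (hφ : ContDiff ℝ 1 φ)
    (hφc : HasCompactSupport φ) (hg : ContDiff ℝ 1 g) (v : E) :
    ∫ x, φ x * fderiv ℝ g x v ∂μ = -∫ x, fderiv ℝ φ x v * g x ∂μ := by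
  have hφ' : Continuous fun x ↦ fderiv ℝ φ x v :=
    (hφ.continuous_fderiv one_ne_zero).clm_apply continuous_const
  have hg' : Continuous fun x ↦ fderiv ℝ g x v :=
    (hg.continuous_fderiv one_ne_zero).clm_apply continuous_const
  refine integral_mul_fderiv_eq_neg_fderiv_mul_of_integrable ?_ ?_ ?_
    (fun x _ ↦ hφ.differentiable one_ne_zero x) (fun x _ ↦ hg.differentiable one_ne_zero x)
  · exact (hφ'.mul hg.continuous).integrable_of_hasCompactSupport (hφc.fderiv_apply ℝ v).mul_right
  · exact (hφ.continuous.mul hg').integrable_of_hasCompactSupport hφc.mul_right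
  · exact (hφ.continuous.mul hg.continuous).integrable_of_hasCompactSupport hφc.mul_right

theorem integral_mul_iteratedFDeriv_two_eq {φ w : E → ℝ} (hφ : ContDiff ℝ 2 φ)
    (hφc : HasCompactSupport φ) (hw : ContDiff ℝ 2 w) (v : E) :
    ∫ x, φ x * iteratedFDeriv ℝ 2 w x ![v, v] ∂μ =
      ∫ x, iteratedFDeriv ℝ 2 φ x ![v, v] * w x ∂μ := by
  have hφ' : ContDiff ℝ 1 fun x ↦ fderiv ℝ φ x v :=
    (hφ.fderiv_right (m := 1) le_rfl).clm_apply contDiff_const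
  have hw' : ContDiff ℝ 1 fun x ↦ fderiv ℝ w x v :=
    (hw.fderiv_right (m := 1) le_rfl).clm_apply contDiff_const
  have hφ'' := (hφ.fderiv_right (m := 1) le_rfl).differentiable one_ne_zero
  have hw'' := (hw.fderiv_right (m := 1) le_rfl).differentiable one_ne_zero
  simp only [iteratedFDeriv_two_apply_self (hφ'' _), iteratedFDeriv_two_apply_self (hw'' _)]
  rw [integral_mul_fderiv_apply_eq_neg (hφ.of_le one_le_two) hφc hw',
    integral_mul_fderiv_apply_eq_neg hφ' (hφc.fderiv_apply ℝ v) (hw.of_le one_le_two), neg_neg]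

end

section

variable {n : ℕ}

theorem laplacian_congr_of_eventuallyEq {u w : EuclideanSpace ℝ (Fin n) → ℝ}
    {x : EuclideanSpace ℝ (Fin n)} (h : u =ᶠ[nhds x] w) : laplacian u x = laplacian w x := by
  simp only [laplacian, (h.iteratedFDeriv ℝ 2).eq_of_nhds]

theorem ContDiff.continuous_laplacian_s8 {u : EuclideanSpace ℝ (Fin n) → ℝ} (hu : ContDiff ℝ 2 u) :
    Continuous (laplacian u) :=
  continuous_finsetSum _ fun _ _ ↦ (hu.continuous_iteratedFDeriv le_rfl).eval_const _

theorem hasCompactSupport_laplacian {u : EuclideanSpace ℝ (Fin n) → ℝ}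
    (hu : HasCompactSupport u) : HasCompactSupport (laplacian u) := by
  refine hu.mono' fun x hx ↦ by_contra fun hxu ↦ hx ?_
  have : iteratedFDeriv ℝ 2 u x = 0 :=
    Function.notMem_support.1 fun h ↦ hxu (support_iteratedFDeriv_subset 2 h)
  simp [laplacian, this]

theorem integral_mul_laplacian_eq {φ w : EuclideanSpace ℝ (Fin n) → ℝ} (hφ : ContDiff ℝ 2 φ)
    (hφc : HasCompactSupport φ) (hw : ContDiff ℝ 2 w) :
    ∫ x, φ x * laplacian w x = ∫ x, laplacian φ x * w x := by
  simp only [laplacian, Finset.mul_sum, Finset.sum_mul]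
  rw [integral_finsetSum, integral_finsetSum]
  · exact Finset.sum_congr rfl fun i _ ↦ integral_mul_iteratedFDeriv_two_eq hφ hφc hw _
  · intro i _
    refine Continuous.integrable_of_hasCompactSupport ?_ (HasCompactSupport.mul_right ?_)
    · exact ((hφ.continuous_iteratedFDeriv le_rfl).eval_const _).mul hw.continuous
    refine hφc.mono' fun x hx ↦ support_iteratedFDeriv_subset (𝕜 := ℝ) 2 fun h ↦ hx ?_
    simp [h]
  · exact fun i _ ↦ (hφ.continuous.mul ((hw.continuous_iteratedFDeriv le_rfl).eval_const _)
      ).integrable_of_hasCompactSupport hφc.mul_right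

end

theorem integral_mul_le_of_abs_le {α : Type*} [MeasurableSpace α] {μ : Measure α} {g w : α → ℝ}
    {M : ℝ} (hg : Integrable g μ) (hw : AEStronglyMeasurable w μ) (hwM : ∀ x, |w x| ≤ M) :
    ∫ x, g x * w x ∂μ ≤ M * ∫ x, |g x| ∂μ := by
  rw [← integral_const_mul]
  refine integral_mono (hg.mul_bdd hw (.of_forall hwM)) (hg.abs.const_mul M) fun x ↦ ?_
  calc g x * w x ≤ |g x| * |w x| := by rw [← abs_mul]; exact le_abs_self _
    _ ≤ M * |g x| := by rw [mul_comm]; exact mul_le_mul_of_nonneg_right (hwM x) (abs_nonneg _)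

theorem exists_setIntegral_laplacian_le {n : ℕ} {Ω K : Set (EuclideanSpace ℝ (Fin n))}
    (hΩ : IsOpen Ω) (hK : IsCompact K) (hKΩ : K ⊆ Ω) {M : ℝ} (hM : 0 ≤ M) :
    ∃ C : ℝ, 0 < C ∧ ∀ u : EuclideanSpace ℝ (Fin n) → ℝ, ContDiffOn ℝ 2 u Ω →
      (∀ x ∈ Ω, |u x| ≤ M) → (∀ x ∈ Ω, 0 ≤ laplacian u x) → ∫ x in K, laplacian u x ≤ C := by
  obtain ⟨φ, hφ, hφc, hφΩ, hφK, hφ01⟩ := exists_contDiff_cutoff 2 hK hΩ hKΩ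
  obtain ⟨ψ, hψ, -, hψΩ, hψφ, hψ01⟩ := exists_contDiff_cutoff 2 hφc hΩ hφΩ
  have hΔφ : Integrable (laplacian φ) :=
    hφ.continuous_laplacian_s8.integrable_of_hasCompactSupport (hasCompactSupport_laplacian hφc)
  have hC : 0 ≤ M * ∫ x, |laplacian φ x| := mul_nonneg hM (integral_nonneg fun _ ↦ abs_nonneg _)
  refine ⟨M * (∫ x, |laplacian φ x|) + 1, hC.trans_lt (lt_add_one _), fun u hu huM hΔu ↦ ?_⟩
  set w := fun x ↦ ψ x * u x
  have hw : ContDiff ℝ 2 w := contDiff_mul_of_tsupport_subset hΩ hψ hψΩ hu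
  have hwM (x) : |w x| ≤ M := by
    by_cases hx : x ∈ Ω
    · rw [abs_mul]
      exact mul_le_of_le_one_left (abs_nonneg _) ((abs_of_nonneg (hψ01 x).1).trans_le (hψ01 x).2)
        |>.trans (huM x hx)
    · simp [w, image_eq_zero_of_notMem_tsupport fun h ↦ hx (hψΩ h), hM]
  have hΔw (x) (hx : x ∈ Function.support φ) : laplacian w x = laplacian u x := by
    refine laplacian_congr_of_eventuallyEq ?_
    filter_upwards [hφ.continuous.isOpen_support.mem_nhds hx] with y hy
    simp [w, hψφ (subset_tsupport _ hy)]
  set g := fun x ↦ φ x * laplacian w x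
  have hg : Integrable g :=
    (hφ.continuous.mul hw.continuous_laplacian_s8).integrable_of_hasCompactSupport hφc.mul_right
  have hg0 (x) : 0 ≤ g x := by
    by_cases hx : x ∈ Function.support φ
    · exact mul_nonneg (hφ01 x).1 (hΔw x hx ▸ hΔu x (hφΩ (subset_tsupport _ hx)))
    · simp [g, Function.notMem_support.1 hx]
  calc ∫ x in K, laplacian u x = ∫ x in K, g x := by
        refine setIntegral_congr_fun hK.measurableSet fun x hx ↦ ?_
        have hφx : φ x = 1 := hφK hx
        simp [g, hφx, hΔw x (by simp [hφx])]
    _ ≤ ∫ x, g x := setIntegral_le_integral hg (.of_forall hg0)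
    _ = ∫ x, laplacian φ x * w x := integral_mul_laplacian_eq hφ hφc hw
    _ ≤ M * ∫ x, |laplacian φ x| :=
        integral_mul_le_of_abs_le hΔφ hw.continuous.aestronglyMeasurable hwM
    _ ≤ M * (∫ x, |laplacian φ x|) + 1 := (lt_add_one _).le

theorem stmt8_general {n : ℕ}
    (Ω : Set (EuclideanSpace ℝ (Fin n))) (hΩo : IsOpen Ω)
    (K : Set (EuclideanSpace ℝ (Fin n))) (hK : IsCompact K) (hKΩ : K ⊆ Ω)
    (m : ℕ) (hm : 1 ≤ m) (M : ℝ) (hM : 0 ≤ M) :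
    ∃ C : ℝ, 0 < C ∧
      ∀ ε : ℝ, 0 < ε →
        ∀ u : Fin m → EuclideanSpace ℝ (Fin n) → ℝ,
          (∀ i, ContDiffOn ℝ 2 (u i) Ω) →
          (∀ i, ∀ x ∈ Ω, 0 ≤ u i x ∧ u i x ≤ M) →
          (∀ i, ∀ x ∈ Ω, laplacian (u i) x = (1 / ε) * ∏ j, u j x) →
          ∫ x in K, (1 / ε) * ∏ j, u j x ≤ C := by
  obtain ⟨C, hC, hCu⟩ := exists_setIntegral_laplacian_le hΩo hK hKΩ hM
  refine ⟨C, hC, fun ε hε u hu huM hΔu ↦ ?_⟩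
  let i₀ : Fin m := ⟨0, hm⟩
  calc ∫ x in K, (1 / ε) * ∏ j, u j x = ∫ x in K, laplacian (u i₀) x :=
        setIntegral_congr_fun hK.measurableSet fun x hx ↦ (hΔu i₀ x (hKΩ hx)).symm
    _ ≤ C := by
        refine hCu _ (hu i₀) (fun x hx ↦ ?_) fun x hx ↦ ?_
        · exact (abs_of_nonneg (huM i₀ x hx).1).trans_le (huM i₀ x hx).2
        · rw [hΔu i₀ x hx]
          exact mul_nonneg (one_div_nonneg.2 hε.le) (prod_nonneg fun j _ ↦ (huM j x hx).1)

/-- Interior uniform bound on the reaction term, uniform in `ε`: on a compact subset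
`K ⊆ Ω`, `∫_K (1/ε) ∏_j u_j ≤ C` with `C` independent of `ε`. -/
theorem stmt8 {n : ℕ} (hn : 3 ≤ n)
    (Ω : Set (EuclideanSpace ℝ (Fin n))) (hΩo : IsOpen Ω)
    (hΩb : Bornology.IsBounded Ω)
    (K : Set (EuclideanSpace ℝ (Fin n))) (hK : IsCompact K) (hKΩ : K ⊆ Ω)
    (m : ℕ) (hm : 1 ≤ m) (M : ℝ) (hM : 0 ≤ M) :
    ∃ C : ℝ, 0 < C ∧
      ∀ ε : ℝ, 0 < ε →
        ∀ u : Fin m → EuclideanSpace ℝ (Fin n) → ℝ,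
          (∀ i, ContDiffOn ℝ 2 (u i) Ω) →
          (∀ i, ∀ x ∈ Ω, 0 ≤ u i x ∧ u i x ≤ M) →
          (∀ i, ∀ x ∈ Ω, laplacian (u i) x = (1 / ε) * ∏ j, u j x) →
          ∫ x in K, (1 / ε) * ∏ j, u j x ≤ C :=
  stmt8_general Ω hΩo K hK hKΩ m hm M hM
end

section
/- Let Ω ⊆ ℝⁿ be a bounded open set, m ≥ 2, ε > 0, M ≥ 0, and for each i ∈ {1,…,m} let C_i > 0 and 0 < β_i ≤ 1. Let A_1,…,A_m : Ω → ℝ be nonnegative, and suppose u_1,…,u_m are continuous on the closure of Ω, twice continuously differentiable on Ω, satisfy 0 ≤ u_i ≤ M on the closure of Ω, |u_i(x) − u_i(y)| ≤ C_i·|x − y|^{β_i} for all x, y in the closure of Ω, Δu_i(x) = (A_i(x)/ε)·∏_{j=1}^m u_j(x) for all x ∈ Ω, and ∏_{i=1}^m u_i(y) = 0 for every y ∈ ∂Ω. Then for every i and every x ∈ Ω whose distance to the boundary ∂Ω is at most min_{1 ≤ k ≤ m} (ε/C_k)^{1/β_k}, one has Δu_i(x) ≤ A_i(x)·M^{m−1}.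 -/
open MeasureTheory Metric Finset

/-- Boundary-strip estimate: near the boundary (at distance at most
`min_k (ε/C_k)^(1/β_k)`), Hölder continuity and segregation of the boundary
data force `Δu_i ≤ A_i · M^(m−1)`, uniformly in `ε`. -/
theorem stmt15 {n : ℕ} (Ω : Set (EuclideanSpace ℝ (Fin n)))
    (hΩo : IsOpen Ω) (hΩb : Bornology.IsBounded Ω)
    (m : ℕ) (hm : 2 ≤ m) (ε : ℝ) (hε : 0 < ε) (M : ℝ) (hM : 0 ≤ M)
    (C β : Fin m → ℝ) (hC : ∀ i, 0 < C i) (hβ0 : ∀ i, 0 < β i) (hβ1 : ∀ i, β i ≤ 1)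
    (A : Fin m → EuclideanSpace ℝ (Fin n) → ℝ)
    (hA_nonneg : ∀ i, ∀ x ∈ Ω, 0 ≤ A i x)
    (u : Fin m → EuclideanSpace ℝ (Fin n) → ℝ)
    (hu_cont : ∀ i, ContinuousOn (u i) (closure Ω))
    (hu_smooth : ∀ i, ContDiffOn ℝ 2 (u i) Ω)
    (hu_bd : ∀ i, ∀ x ∈ closure Ω, 0 ≤ u i x ∧ u i x ≤ M)
    (hu_holder : ∀ i, ∀ x ∈ closure Ω, ∀ y ∈ closure Ω,
      |u i x - u i y| ≤ C i * ‖x - y‖ ^ β i)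
    (hu_eq : ∀ i, ∀ x ∈ Ω, laplacian (u i) x = (A i x / ε) * ∏ j, u j x)
    (hbd_seg : ∀ y ∈ frontier Ω, ∏ i, u i y = 0) :
    ∀ i, ∀ x ∈ Ω,
      infDist x (frontier Ω)
        ≤ Finset.univ.inf' ⟨⟨0, by omega⟩, Finset.mem_univ _⟩
            (fun k => (ε / C k) ^ (1 / β k)) →
      laplacian (u i) x ≤ A i x * M ^ (m - 1) := by
  intro i x hx hd
  by_cases hfr : (frontier Ω).Nonempty
  · -- frontier is compact
    have hcpt : IsCompact (frontier Ω) :=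
      Metric.isCompact_of_isClosed_isBounded isClosed_frontier
        (hΩb.closure.subset frontier_subset_closure)
    obtain ⟨y, hy, hyd⟩ := hcpt.exists_infDist_eq_dist hfr x
    obtain ⟨k, -, hk⟩ := Finset.prod_eq_zero_iff.mp (hbd_seg y hy)
    have hyc : y ∈ closure Ω := frontier_subset_closure hy
    have hxc : x ∈ closure Ω := subset_closure hx
    -- u k x ≤ ε
    have hdist : ‖x - y‖ ≤ (ε / C k) ^ (1 / β k) := by
      rw [← dist_eq_norm, ← hyd]
      exact hd.trans (Finset.inf'_le _ (Finset.mem_univ k))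
    have hpow : ‖x - y‖ ^ β k ≤ ε / C k := by
      calc ‖x - y‖ ^ β k ≤ ((ε / C k) ^ (1 / β k)) ^ β k :=
            Real.rpow_le_rpow (norm_nonneg _) hdist (hβ0 k).le
        _ = ε / C k := by
            rw [← Real.rpow_mul (div_nonneg hε.le (hC k).le),
              one_div_mul_cancel (hβ0 k).ne', Real.rpow_one]
    have hukx : u k x ≤ ε := by
      have h1 := hu_holder k x hxc y hyc
      rw [hk, sub_zero, abs_of_nonneg (hu_bd k x hxc).1] at h1
      calc u k x ≤ C k * (‖x - y‖ ^ β k) := h1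
        _ ≤ C k * (ε / C k) := by
            exact mul_le_mul_of_nonneg_left hpow (hC k).le
        _ = ε := by rw [mul_comm]; exact div_mul_cancel₀ ε (hC k).ne'
    -- product bound
    have hprod : ∏ j, u j x ≤ ε * M ^ (m - 1) := by
      rw [← Finset.mul_prod_erase Finset.univ _ (Finset.mem_univ k)]
      have h2 : ∏ j ∈ Finset.univ.erase k, u j x ≤ M ^ (m - 1) := by
        calc ∏ j ∈ Finset.univ.erase k, u j x ≤ ∏ _j ∈ Finset.univ.erase k, M :=
              Finset.prod_le_prod (fun j _ => (hu_bd j x hxc).1)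
                (fun j _ => (hu_bd j x hxc).2)
          _ = M ^ (m - 1) := by
              rw [Finset.prod_const, Finset.card_erase_of_mem (Finset.mem_univ k),
                Finset.card_univ, Fintype.card_fin]
      exact mul_le_mul hukx h2
        (Finset.prod_nonneg fun j _ => (hu_bd j x hxc).1) hε.le
    rw [hu_eq i x hx]
    calc A i x / ε * ∏ j, u j x ≤ A i x / ε * (ε * M ^ (m - 1)) :=
          mul_le_mul_of_nonneg_left hprod (div_nonneg (hA_nonneg i x hx) hε.le)
      _ = A i x * M ^ (m - 1) := by field_simp
  · -- empty frontier: the space is a single point, laplacian is 0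
    have hclopen : IsClopen Ω :=
      isClopen_iff_frontier_eq_empty.mpr (Set.not_nonempty_iff_eq_empty.mp hfr)
    have huniv : Ω = Set.univ := by
      rcases isClopen_iff.mp hclopen with h | h
      · exact absurd (h ▸ hx) (Set.notMem_empty x)
      · exact h
    have hsub : Subsingleton (EuclideanSpace ℝ (Fin n)) := by
      by_contra h
      have : Nontrivial (EuclideanSpace ℝ (Fin n)) := not_subsingleton_iff_nontrivial.mp h
      exact NormedSpace.unbounded_univ ℝ _ (huniv ▸ hΩb)
    have hconst : u i = fun _ => u i x := funext fun z => by
      rw [Subsingleton.elim z x]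
    have : laplacian (u i) x = 0 := by
      unfold laplacian
      rw [hconst]
      simp [iteratedFDeriv_const_of_ne (two_ne_zero)]
    rw [this]
    exact mul_nonneg (hA_nonneg i x hx) (pow_nonneg hM _)
end
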